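/- arXiv:math/0512488 — 4 statements merged into one kernel-verified Lean document; each statement's English description precedes it below -/
import Mathlib

section
/- Let X be a one-sided shift space over a finite alphabet 𝔞 and let n ≥ 1. Define the function f : X → ℂ by f = 1 − L_n(1) + ∑_{u∈𝔞ⁿ} (L_n(1_{C(u)}))², where 1 is the constant function one, 1_{C(u)} is the indicator function of the cylinder set C(u), and the sum runs over all words u of length n. Then for every x ∈ X: f(x) = 1/#σ⁻ⁿ{x} if x ∈ σⁿ(X), and f(x) = 1 if x ∉ σⁿ(X). In particular f is everywhere nonzero, with values in (0,1]. -/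
open scoped Classical

/-- The one-sided shift map on `ℕ → A`. -/
def shiftMap {A : Type*} (x : ℕ → A) : ℕ → A := fun i => x (i + 1)

/-- The cylinder set `C(u) = {x ∈ X : x₁⋯x_{|u|} = u}` of a word `u`. -/
def Cyl {A : Type*} (X : Set (ℕ → A)) (u : List A) : Set (ℕ → A) :=
  {x | x ∈ X ∧ ∀ (i : ℕ) (h : i < u.length), x i = u.get ⟨i, h⟩}

/-- The `n`-step transfer operator of a one-sided shift space `X`:
`(Lₙ f)(x) = (1/#σ⁻ⁿ{x}) ∑_{y ∈ σ⁻ⁿ{x}} f(y)` if `x ∈ σⁿ(X)` and `0` otherwise. -/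
noncomputable def transferLn {A : Type*} (X : Set (ℕ → A)) (n : ℕ)
    (f : (ℕ → A) → ℂ) (x : ℕ → A) : ℂ :=
  if ({y | y ∈ X ∧ shiftMap^[n] y = x}).Nonempty then
    (({y | y ∈ X ∧ shiftMap^[n] y = x}).ncard : ℂ)⁻¹ *
      ∑ᶠ y ∈ {y | y ∈ X ∧ shiftMap^[n] y = x}, f y
  else 0

lemma shift_iter_apply {A : Type*} (n : ℕ) (y : ℕ → A) (i : ℕ) :
    shiftMap^[n] y i = y (i + n) := by
  induction n generalizing y with
  | zero => simp
  | succ n ih =>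
    rw [Function.iterate_succ_apply, ih]
    simp only [shiftMap]
    rw [Nat.add_assoc]

/-- the function `f = 1 − Lₙ(1) + ∑_{u ∈ 𝔞ⁿ} (Lₙ(1_{C(u)}))²` satisfies
`f(x) = 1/#σ⁻ⁿ{x}` for `x ∈ σⁿ(X)` and `f(x) = 1` for `x ∉ σⁿ(X)`; in particular `f`
is everywhere nonzero with values in `(0,1]`. -/
theorem transferLn_indicator_sum_formula {A : Type*} [Fintype A] [Nonempty A]
    [TopologicalSpace A] [DiscreteTopology A]
    (X : Set (ℕ → A)) (hXclosed : IsClosed X) (hXinv : ∀ x ∈ X, shiftMap x ∈ X)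
    (n : ℕ) (hn : 1 ≤ n)
    (f : (ℕ → A) → ℂ)
    (hf : f = fun x => 1 - transferLn X n (fun _ => 1) x +
      ∑ u : Fin n → A,
        (transferLn X n (Set.indicator (Cyl X (List.ofFn u)) fun _ => 1) x) ^ 2) :
    ∀ x ∈ X,
      (x ∈ shiftMap^[n] '' X →
        f x = (({y | y ∈ X ∧ shiftMap^[n] y = x}).ncard : ℂ)⁻¹) ∧
      (x ∉ shiftMap^[n] '' X → f x = 1) ∧
      f x ≠ 0 ∧ (∃ r : ℝ, 0 < r ∧ r ≤ 1 ∧ f x = r) := by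
  subst hf
  intro x hx
  have hinj : Set.InjOn (fun y : ℕ → A => (fun i : Fin n => y i))
      {y | y ∈ X ∧ shiftMap^[n] y = x} := by
    intro y hy z hz h
    funext i
    rcases lt_or_ge i n with hi | hi
    · exact congrFun h ⟨i, hi⟩
    · obtain ⟨j, rfl⟩ : ∃ j, i = j + n := ⟨i - n, by omega⟩
      have h1 := shift_iter_apply n y j
      have h2 := shift_iter_apply n z j
      rw [hy.2] at h1
      rw [hz.2] at h2
      rw [← h1, ← h2]
  have hfin : ({y | y ∈ X ∧ shiftMap^[n] y = x}).Finite :=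
    Set.Finite.of_finite_image (Set.toFinite _) hinj
  have himg : x ∈ shiftMap^[n] '' X ↔ ({y | y ∈ X ∧ shiftMap^[n] y = x}).Nonempty := by
    constructor
    · rintro ⟨y, hy, hyx⟩; exact ⟨y, hy, hyx⟩
    · rintro ⟨y, hy⟩; exact ⟨y, hy.1, hy.2⟩
  by_cases hne : ({y | y ∈ X ∧ shiftMap^[n] y = x}).Nonempty
  · -- x is in the image
    have hxmem : x ∈ shiftMap^[n] '' X := himg.mpr hne
    set T := hfin.toFinset with hTdef
    have hTmem : ∀ y, y ∈ T ↔ y ∈ X ∧ shiftMap^[n] y = x := fun y => hfin.mem_toFinset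
    have hNcard : ({y | y ∈ X ∧ shiftMap^[n] y = x}).ncard = T.card :=
      Set.ncard_eq_toFinset_card _ hfin
    have hTne : T.Nonempty := by
      obtain ⟨y, hy⟩ := hne
      exact ⟨y, (hTmem y).mpr hy⟩
    have hN0 : T.card ≠ 0 := Finset.card_ne_zero_of_mem hTne.choose_spec
    have hNC : ((T.card : ℂ)) ≠ 0 := Nat.cast_ne_zero.mpr hN0
    have key : ∀ g : (ℕ → A) → ℂ,
        transferLn X n g x = (T.card : ℂ)⁻¹ * ∑ y ∈ T, g y := by
      intro g
      rw [transferLn, if_pos hne, hNcard]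
      congr 1
      rw [← hfin.coe_toFinset, finsum_mem_coe_finset]
    have L1 : transferLn X n (fun _ => (1 : ℂ)) x = 1 := by
      rw [key]
      simp [inv_mul_cancel₀ hNC]
    have hind : ∀ u : Fin n → A, ∀ y ∈ T,
        Set.indicator (Cyl X (List.ofFn u)) (fun _ => (1 : ℂ)) y =
          if (fun i : Fin n => y i) = u then 1 else 0 := by
      intro u y hy
      have hyS := (hTmem y).mp hy
      by_cases hc : (fun i : Fin n => y i) = u
      · rw [if_pos hc, Set.indicator_of_mem]
        refine ⟨hyS.1, ?_⟩
        intro i hi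
        have hi' : i < n := by simpa using hi
        have := congrFun hc ⟨i, hi'⟩
        simpa [List.get_ofFn] using this
      · rw [if_neg hc, Set.indicator_of_notMem]
        intro hmem
        apply hc
        funext i
        have := hmem.2 i.1 (by simpa using i.2)
        simpa [List.get_ofFn] using this
    have hcard_le : ∀ u : Fin n → A,
        (T.filter (fun y => (fun i : Fin n => y i) = u)).card ≤ 1 := by
      intro u
      apply Finset.card_le_one.mpr
      intro a ha b hb
      simp only [Finset.mem_filter] at ha hb
      exact hinj ((hTmem a).mp ha.1) ((hTmem b).mp hb.1) (ha.2.trans hb.2.symm)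
    have hLsum : ∀ u : Fin n → A,
        transferLn X n (Set.indicator (Cyl X (List.ofFn u)) fun _ => (1 : ℂ)) x =
          (T.card : ℂ)⁻¹ * ((T.filter (fun y => (fun i : Fin n => y i) = u)).card : ℂ) := by
      intro u
      rw [key]
      congr 1
      rw [Finset.sum_congr rfl (hind u)]
      simp [Finset.sum_boole]
    have hfiber : ∑ u : Fin n → A,
        (T.filter (fun y => (fun i : Fin n => y i) = u)).card = T.card :=
      (Finset.card_eq_sum_card_fiberwise (fun y _ => Finset.mem_univ
        (fun i : Fin n => y i))).symm
    have hsq : ∀ u : Fin n → A,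
        (((T.filter (fun y => (fun i : Fin n => y i) = u)).card : ℂ)) ^ 2 =
          ((T.filter (fun y => (fun i : Fin n => y i) = u)).card : ℂ) := by
      intro u
      rcases Nat.le_one_iff_eq_zero_or_eq_one.mp (hcard_le u) with h | h <;> rw [h] <;> norm_num
    have hSum : ∑ u : Fin n → A,
        (transferLn X n (Set.indicator (Cyl X (List.ofFn u)) fun _ => (1 : ℂ)) x) ^ 2 =
          (T.card : ℂ)⁻¹ := by
      calc ∑ u : Fin n → A,
          (transferLn X n (Set.indicator (Cyl X (List.ofFn u)) fun _ => (1 : ℂ)) x) ^ 2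
          = ∑ u : Fin n → A, (T.card : ℂ)⁻¹ * (T.card : ℂ)⁻¹ *
              ((T.filter (fun y => (fun i : Fin n => y i) = u)).card : ℂ) := by
            refine Finset.sum_congr rfl fun u _ => ?_
            rw [hLsum u, mul_pow, hsq u]
            ring
        _ = (T.card : ℂ)⁻¹ * (T.card : ℂ)⁻¹ *
              ∑ u : Fin n → A, ((T.filter (fun y => (fun i : Fin n => y i) = u)).card : ℂ) := by
            rw [Finset.mul_sum]
        _ = (T.card : ℂ)⁻¹ := by
            rw [← Nat.cast_sum, hfiber]
            field_simp
    have hval : (1 : ℂ) - transferLn X n (fun _ => 1) x +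
        ∑ u : Fin n → A,
          (transferLn X n (Set.indicator (Cyl X (List.ofFn u)) fun _ => 1) x) ^ 2 =
          (T.card : ℂ)⁻¹ := by
      rw [L1, hSum]; ring
    refine ⟨fun _ => ?_, fun hnot => absurd hxmem hnot, ?_, ?_⟩
    · simp only [hval, hNcard]
    · simp only [hval]
      exact inv_ne_zero hNC
    · refine ⟨((T.card : ℝ))⁻¹, ?_, ?_, ?_⟩
      · positivity
      · apply inv_le_one_of_one_le₀
        exact_mod_cast Nat.one_le_iff_ne_zero.mpr hN0
      · simp only [hval]
        push_cast
        norm_num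
  · -- x is not in the image
    have hnot : x ∉ shiftMap^[n] '' X := fun h => hne (himg.mp h)
    have hz : ∀ g : (ℕ → A) → ℂ, transferLn X n g x = 0 := by
      intro g; rw [transferLn, if_neg hne]
    have hval : (1 : ℂ) - transferLn X n (fun _ => 1) x +
        ∑ u : Fin n → A,
          (transferLn X n (Set.indicator (Cyl X (List.ofFn u)) fun _ => 1) x) ^ 2 = 1 := by
      simp [hz]
    refine ⟨fun h => absurd h hnot, fun _ => hval, ?_, 1, by norm_num, le_refl 1, by simp [hval]⟩
    simp [hval]
end

section
/- Let X be a one-sided shift space over a finite alphabet 𝔞. Then D_X equals the smallest norm-closed *-subalgebra of ℓ∞(X) containing the set of indicator functions {1_{C(u,v)} : u, v ∈ 𝔞^*}. -/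
open scoped Classical

/-- The point `ux` obtained by prepending the word `u` to `x`. -/
def prepend {A : Type*} (u : List A) (x : ℕ → A) : ℕ → A :=
  fun i => if h : i < u.length then u.get ⟨i, h⟩ else x (i - u.length)

/-- The set `C(u,v) = {vx ∈ X : ux ∈ X}`, as a subset of `X`. -/
def CylUVsub {A : Type*} (X : Set (ℕ → A)) (u v : List A) : Set X :=
  {z : X | ∃ x : ℕ → A, (z : ℕ → A) = prepend v x ∧ prepend u x ∈ X}

/-- The restriction of the shift to a shift space `X`. -/
def shiftX {A : Type*} {X : Set (ℕ → A)} (hX : ∀ x ∈ X, shiftMap x ∈ X)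
    (x : X) : X := ⟨shiftMap (x : ℕ → A), hX _ x.2⟩

/-- The endomorphism `α(f) = f ∘ σ` of functions on `X`. -/
def alphaX {A : Type*} {X : Set (ℕ → A)} (hX : ∀ x ∈ X, shiftMap x ∈ X)
    (f : X → ℂ) : X → ℂ := fun x => f (shiftX hX x)

/-- The transfer operator on functions on `X`:
`(L f)(x) = (1/#σ⁻¹{x}) ∑_{y ∈ σ⁻¹{x}} f(y)` if `x ∈ σ(X)`, and `0` otherwise. -/
noncomputable def transferLX {A : Type*} (X : Set (ℕ → A)) (f : X → ℂ)
    (x : X) : ℂ :=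
  if ({y : X | shiftMap (y : ℕ → A) = (x : ℕ → A)}).Nonempty then
    (({y : X | shiftMap (y : ℕ → A) = (x : ℕ → A)}).ncard : ℂ)⁻¹ *
      ∑ᶠ y ∈ {y : X | shiftMap (y : ℕ → A) = (x : ℕ → A)}, f y
  else 0

/-- `D` is a norm-closed `*`-subalgebra of the C*-algebra `ℓ∞(X)` of bounded functions
on `X` (with pointwise operations, complex conjugation and the supremum norm):
all members are bounded, `D` is closed under sum, product, scalar multiples and
(pointwise) complex conjugation, and `D` contains every uniform limit of its members. -/
def IsClosedStarSubalg {Y : Type*} (D : Set (Y → ℂ)) : Prop :=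
  (∀ f ∈ D, ∃ M : ℝ, ∀ x, ‖f x‖ ≤ M) ∧
  (∀ f ∈ D, ∀ g ∈ D, f + g ∈ D) ∧
  (∀ f ∈ D, ∀ g ∈ D, f * g ∈ D) ∧
  (∀ c : ℂ, ∀ f ∈ D, c • f ∈ D) ∧
  (∀ f ∈ D, star f ∈ D) ∧
  (∀ f : Y → ℂ, (∀ ε : ℝ, 0 < ε → ∃ g ∈ D, ∀ x, ‖f x - g x‖ ≤ ε) → f ∈ D)

/-- `D_X`: the smallest norm-closed `*`-subalgebra of `ℓ∞(X)` containing `C(X)`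
and closed under the maps `α` and `L`. -/
def DX {A : Type*} [TopologicalSpace A] (X : Set (ℕ → A))
    (hX : ∀ x ∈ X, shiftMap x ∈ X) : Set (X → ℂ) :=
  ⋂₀ {D | IsClosedStarSubalg D ∧
    (∀ f : X → ℂ, Continuous f → f ∈ D) ∧
    (∀ f ∈ D, alphaX hX f ∈ D) ∧
    (∀ f ∈ D, transferLX X f ∈ D)}


/-!
Let `E` be the closed `*`-algebra generated by the indicators `1_{C(u,v)}`. Everything rests on
`1_{C(u,av)} = 1_{Z(a)} · α(1_{C(u,v)})`, where `Z(a) = {x | x₀ = a} = C(∅, a)`, on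
`L f (x) = #σ⁻¹{x}⁻¹ · ∑_b f(bx)`, and on the fact that a closed unital `*`-algebra containing a
function `f` of finite range contains `φ ∘ f` for every `φ : ℂ → ℂ` (Lagrange interpolation).

`D_X ⊆ E`: `α` and `f ↦ f(b ·)` are contractive `*`-homomorphisms mapping generators into `E`,
hence they map `E` into itself. So `E` contains the indicators of the coordinate sets
`{x | xₙ = a}`, which separate the points of the compact space `X`, and Stone–Weierstrass gives
`C(X) ⊆ E`. The function `x ↦ #σ⁻¹{x} = ∑_b 1_{C(b,∅)}(x)` has finite range, so its inverse is in
`E` as well, and `E` is closed under `L`.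

`E ⊆ D_X`: the `1_{Z(a)}` are continuous, so by the recursion it suffices to produce `1_{C(u,∅)}`,
and `1_{C(∅,u)}` is obtained starting from `1 = 1_{C(∅,∅)}`. Now `L^{|u|} 1_{C(∅,u)}` takes
finitely many values and its support is exactly `C(u,∅)`.
-/

open Set

namespace IsClosedStarSubalg

variable {Y : Type*} {D : Set (Y → ℂ)}

def toStarSubalgebra (hD : IsClosedStarSubalg D) (h1 : (1 : Y → ℂ) ∈ D) :
    StarSubalgebra ℂ (Y → ℂ) where
  carrier := D
  mul_mem' ha hb := hD.2.2.1 _ ha _ hb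
  add_mem' ha hb := hD.2.1 _ ha _ hb
  algebraMap_mem' c := by simpa [Algebra.algebraMap_eq_smul_one] using hD.2.2.2.1 c 1 h1
  star_mem' := hD.2.2.2.2.1 _

theorem sInter {S : Set (Set (Y → ℂ))} (hS : ∀ D ∈ S, IsClosedStarSubalg D) (hne : S.Nonempty) :
    IsClosedStarSubalg (⋂₀ S) := by
  obtain ⟨D₀, hD₀⟩ := hne
  refine ⟨fun f hf => (hS D₀ hD₀).1 f (hf D₀ hD₀), fun f hf g hg D hD => ?_,
    fun f hf g hg D hD => ?_, fun c f hf D hD => ?_, fun f hf D hD => ?_, fun f hf D hD => ?_⟩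
  · exact (hS D hD).2.1 f (hf D hD) g (hg D hD)
  · exact (hS D hD).2.2.1 f (hf D hD) g (hg D hD)
  · exact (hS D hD).2.2.2.1 c f (hf D hD)
  · exact (hS D hD).2.2.2.2.1 f (hf D hD)
  · exact (hS D hD).2.2.2.2.2 f fun ε hε => (hf ε hε).imp fun g hg => ⟨hg.1 D hD, hg.2⟩

theorem comp_mem_of_finite_range (hD : IsClosedStarSubalg D) (h1 : (1 : Y → ℂ) ∈ D)
    {f : Y → ℂ} (hf : f ∈ D) (hfin : (range f).Finite) (φ : ℂ → ℂ) : φ ∘ f ∈ D := by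
  set p := Lagrange.interpolate hfin.toFinset id φ
  have hp : φ ∘ f = Polynomial.aeval f p := by
    funext y
    have hy : f y ∈ hfin.toFinset := hfin.mem_toFinset.2 (mem_range_self y)
    rw [Function.comp_apply, Polynomial.aeval_fn_apply, Polynomial.coe_aeval_eq_eval]
    exact (Lagrange.eval_interpolate_at_node φ (injOn_id _) hy).symm
  rw [hp]
  exact Algebra.adjoin_le (S := (hD.toStarSubalgebra h1).toSubalgebra)
    (singleton_subset_iff.2 hf) (Polynomial.aeval_mem_adjoin_singleton ℂ f)

theorem indicator_support_mem (hD : IsClosedStarSubalg D) (h1 : (1 : Y → ℂ) ∈ D)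
    {f : Y → ℂ} (hf : f ∈ D) (hfin : (range f).Finite) :
    (Function.support f).indicator 1 ∈ D := by
  convert hD.comp_mem_of_finite_range h1 hf hfin fun t => if t = 0 then 0 else 1 using 1
  funext y
  by_cases hy : f y = 0 <;> simp [hy]

theorem continuous_mem [TopologicalSpace Y] [CompactSpace Y] (hD : IsClosedStarSubalg D)
    (h1 : (1 : Y → ℂ) ∈ D) (hsep : ∀ y y', y ≠ y' → ∃ g : C(Y, ℂ), ⇑g ∈ D ∧ g y ≠ g y')
    {f : Y → ℂ} (hf : Continuous f) : f ∈ D := by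
  let S : StarSubalgebra ℂ C(Y, ℂ) :=
    { carrier := {g | ⇑g ∈ D}
      mul_mem' := fun ha hb => hD.2.2.1 _ ha _ hb
      add_mem' := fun ha hb => hD.2.1 _ ha _ hb
      algebraMap_mem' := fun c => (hD.toStarSubalgebra h1).algebraMap_mem c
      star_mem' := fun ha => hD.2.2.2.2.1 _ ha }
  have hdense := ContinuousMap.starSubalgebra_topologicalClosure_eq_top_of_separatesPoints S
    fun y y' hyy' => by
      obtain ⟨g, hgD, hg⟩ := hsep y y' hyy'
      exact ⟨g, ⟨g, hgD, rfl⟩, hg⟩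
  have hfS : (⟨f, hf⟩ : C(Y, ℂ)) ∈ closure (S : Set C(Y, ℂ)) := by
    change _ ∈ S.topologicalClosure
    rw [hdense]
    trivial
  refine hD.2.2.2.2.2 f fun ε hε => ?_
  obtain ⟨g, hgS, hfg⟩ := Metric.mem_closure_iff.1 hfS ε hε
  refine ⟨g, hgS, fun y => ?_⟩
  rw [← dist_eq_norm]
  exact (ContinuousMap.dist_apply_le_dist y).trans hfg.le

end IsClosedStarSubalg

section closedStarAdjoin

variable {Y : Type*}

theorem isClosedStarSubalg_setOf_bounded :
    IsClosedStarSubalg {f : Y → ℂ | ∃ M, ∀ x, ‖f x‖ ≤ M} := by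
  refine ⟨fun f hf => hf, ?_, ?_, ?_, ?_, ?_⟩
  · rintro f ⟨M, hM⟩ g ⟨N, hN⟩
    exact ⟨M + N, fun x => (norm_add_le _ _).trans (add_le_add (hM x) (hN x))⟩
  · rintro f ⟨M, hM⟩ g ⟨N, hN⟩
    refine ⟨M * N, fun x => ?_⟩
    rw [Pi.mul_apply, norm_mul]
    exact mul_le_mul (hM x) (hN x) (norm_nonneg _) ((norm_nonneg _).trans (hM x))
  · rintro c f ⟨M, hM⟩
    refine ⟨‖c‖ * M, fun x => ?_⟩
    rw [Pi.smul_apply, norm_smul]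
    exact mul_le_mul_of_nonneg_left (hM x) (norm_nonneg _)
  · rintro f ⟨M, hM⟩
    exact ⟨M, fun x => by rw [Pi.star_apply, norm_star]; exact hM x⟩
  · intro f hf
    obtain ⟨g, ⟨M, hM⟩, hg⟩ := hf 1 one_pos
    refine ⟨1 + M, fun x => ?_⟩
    calc ‖f x‖ ≤ ‖f x - g x‖ + ‖g x‖ := norm_le_norm_sub_add _ _
    _ ≤ 1 + M := add_le_add (hg x) (hM x)

def closedStarAdjoin (G : Set (Y → ℂ)) : Set (Y → ℂ) :=
  ⋂₀ {D | IsClosedStarSubalg D ∧ G ⊆ D}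

variable {G : Set (Y → ℂ)}

theorem subset_closedStarAdjoin : G ⊆ closedStarAdjoin G :=
  fun _ hg _ hD => hD.2 hg

theorem closedStarAdjoin_subset {D : Set (Y → ℂ)} (hD : IsClosedStarSubalg D) (hGD : G ⊆ D) :
    closedStarAdjoin G ⊆ D :=
  sInter_subset_of_mem ⟨hD, hGD⟩

theorem isClosedStarSubalg_closedStarAdjoin (hG : ∀ g ∈ G, ∃ M, ∀ x, ‖g x‖ ≤ M) :
    IsClosedStarSubalg (closedStarAdjoin G) :=
  IsClosedStarSubalg.sInter (fun _ hD => hD.1) ⟨_, isClosedStarSubalg_setOf_bounded, hG⟩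

theorem map_mem_closedStarAdjoin (hG : IsClosedStarSubalg (closedStarAdjoin G))
    (T : (Y → ℂ) →⋆ₙₐ[ℂ] (Y → ℂ)) (hT : ∀ f ε, (∀ x, ‖f x‖ ≤ ε) → ∀ x, ‖T f x‖ ≤ ε)
    (hTG : ∀ g ∈ G, T g ∈ closedStarAdjoin G) {f : Y → ℂ} (hf : f ∈ closedStarAdjoin G) :
    T f ∈ closedStarAdjoin G := by
  suffices h : closedStarAdjoin G ⊆ {f | f ∈ closedStarAdjoin G ∧ T f ∈ closedStarAdjoin G} from
    (h hf).2
  refine closedStarAdjoin_subset ⟨fun f hf => hG.1 f hf.1, ?_, ?_, ?_, ?_, ?_⟩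
    fun g hg => ⟨subset_closedStarAdjoin hg, hTG g hg⟩
  · rintro f ⟨hf, hTf⟩ g ⟨hg, hTg⟩
    exact ⟨hG.2.1 f hf g hg, by rw [map_add]; exact hG.2.1 _ hTf _ hTg⟩
  · rintro f ⟨hf, hTf⟩ g ⟨hg, hTg⟩
    exact ⟨hG.2.2.1 f hf g hg, by rw [map_mul]; exact hG.2.2.1 _ hTf _ hTg⟩
  · rintro c f ⟨hf, hTf⟩
    exact ⟨hG.2.2.2.1 c f hf, by rw [map_smul]; exact hG.2.2.2.1 c _ hTf⟩
  · rintro f ⟨hf, hTf⟩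
    exact ⟨hG.2.2.2.2.1 f hf, by rw [map_star]; exact hG.2.2.2.2.1 _ hTf⟩
  · intro f happrox
    refine ⟨hG.2.2.2.2.2 f fun ε hε => (happrox ε hε).imp fun g hg => ⟨hg.1.1, hg.2⟩,
      hG.2.2.2.2.2 _ fun ε hε => ?_⟩
    obtain ⟨g, ⟨-, hTg⟩, hfg⟩ := happrox ε hε
    refine ⟨T g, hTg, fun x => ?_⟩
    rw [← Pi.sub_apply, ← map_sub]
    exact hT _ ε hfg x

end closedStarAdjoin

namespace ShiftSpace

variable {A : Type*} {X : Set (ℕ → A)} (hX : ∀ x ∈ X, shiftMap x ∈ X)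

@[simp] theorem prepend_nil (x : ℕ → A) : prepend [] x = x := by
  funext i; simp [prepend]

@[simp] theorem prepend_singleton_zero (a : A) (x : ℕ → A) : prepend [a] x 0 = a := rfl

@[simp] theorem shiftMap_prepend_singleton (a : A) (x : ℕ → A) :
    shiftMap (prepend [a] x) = x := by
  funext i; simp [shiftMap, prepend]

theorem prepend_singleton_shiftMap (z : ℕ → A) : prepend [z 0] (shiftMap z) = z := by
  funext i; cases i <;> simp [shiftMap, prepend]

theorem prepend_cons (a : A) (u : List A) (x : ℕ → A) :
    prepend (a :: u) x = prepend [a] (prepend u x) := by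
  funext i
  cases i with
  | zero => rfl
  | succ i => simp [prepend]

theorem prepend_append (u v : List A) (x : ℕ → A) :
    prepend (u ++ v) x = prepend u (prepend v x) := by
  induction u with
  | nil => simp
  | cons a u ih => rw [List.cons_append, prepend_cons, ih, ← prepend_cons]

theorem mem_cylUVsub_nil {u : List A} {z : X} : z ∈ CylUVsub X u [] ↔ prepend u z ∈ X := by
  simp [CylUVsub]

theorem cylUVsub_nil_nil : CylUVsub X [] [] = univ := by
  ext z
  simp [mem_cylUVsub_nil]

theorem cylUVsub_cons (u v : List A) (a : A) :
    CylUVsub X u (a :: v) = {z : X | (z : ℕ → A) 0 = a} ∩ shiftX hX ⁻¹' CylUVsub X u v := by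
  ext z
  simp only [CylUVsub, mem_inter_iff, mem_ofPred_eq, mem_preimage, shiftX]
  constructor
  · rintro ⟨x, hz, hx⟩
    rw [hz, prepend_cons]
    exact ⟨rfl, x, by simp, hx⟩
  · rintro ⟨rfl, x, hz, hx⟩
    exact ⟨x, by rw [prepend_cons, ← hz, prepend_singleton_shiftMap], hx⟩

theorem indicator_cylUVsub_cons (u v : List A) (a : A) :
    (CylUVsub X u (a :: v)).indicator 1 =
      {z : X | (z : ℕ → A) 0 = a}.indicator 1 * alphaX hX ((CylUVsub X u v).indicator 1) := by
  rw [cylUVsub_cons hX, inter_indicator_one]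
  rfl

theorem indicator_cylUVsub_mem_of_nil {D : Set (X → ℂ)} (hmul : ∀ f ∈ D, ∀ g ∈ D, f * g ∈ D)
    (hα : ∀ f ∈ D, alphaX hX f ∈ D) (hcoord : ∀ a, {z : X | (z : ℕ → A) 0 = a}.indicator 1 ∈ D)
    {u : List A} (hnil : (CylUVsub X u []).indicator 1 ∈ D) (v : List A) :
    (CylUVsub X u v).indicator 1 ∈ D := by
  induction v with
  | nil => exact hnil
  | cons a v ih => rw [indicator_cylUVsub_cons hX]; exact hmul _ (hcoord a) _ (hα _ ih)

def alphaHom : (X → ℂ) →⋆ₙₐ[ℂ] (X → ℂ) where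
  toFun := alphaX hX
  map_smul' _ _ := rfl
  map_zero' := rfl
  map_add' _ _ := rfl
  map_mul' _ _ := rfl
  map_star' _ := rfl

variable (X) in
noncomputable def compCons (b : A) : (X → ℂ) →⋆ₙₐ[ℂ] (X → ℂ) where
  toFun f x := if h : prepend [b] x ∈ X then f ⟨_, h⟩ else 0
  map_smul' c f := by funext x; by_cases h : prepend [b] ↑x ∈ X <;> simp [h]
  map_zero' := by funext x; by_cases h : prepend [b] ↑x ∈ X <;> simp [h]
  map_add' f g := by funext x; by_cases h : prepend [b] ↑x ∈ X <;> simp [h]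
  map_mul' f g := by funext x; by_cases h : prepend [b] ↑x ∈ X <;> simp [h]
  map_star' f := by funext x; by_cases h : prepend [b] ↑x ∈ X <;> simp [h]

theorem compCons_apply (b : A) (f : X → ℂ) (x : X) :
    compCons X b f x = if h : prepend [b] x ∈ X then f ⟨_, h⟩ else 0 := rfl

theorem norm_compCons_apply_le {b : A} {f : X → ℂ} {ε : ℝ} (hf : ∀ x, ‖f x‖ ≤ ε) (x : X) :
    ‖compCons X b f x‖ ≤ ε := by
  by_cases h : prepend [b] x ∈ X
  · simpa [compCons_apply, h] using hf _
  · simpa [compCons_apply, h] using (norm_nonneg _).trans (hf x)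

theorem compCons_indicator_cylUVsub_nil (b : A) (u : List A) :
    compCons X b ((CylUVsub X u []).indicator 1) =
      (CylUVsub X (u ++ [b]) []).indicator 1 * (CylUVsub X [b] []).indicator 1 := by
  funext x
  by_cases h : prepend [b] x ∈ X
  · simp [compCons_apply, h, indicator_apply, mem_cylUVsub_nil, prepend_append]
  · simp [compCons_apply, h, indicator_apply, mem_cylUVsub_nil]

include hX in
theorem compCons_indicator_cylUVsub_cons (b c : A) (u w : List A) :
    compCons X b ((CylUVsub X u (c :: w)).indicator 1) =
      if b = c then (CylUVsub X u w).indicator 1 * (CylUVsub X [b] []).indicator 1 else 0 := by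
  funext x
  by_cases h : prepend [b] x ∈ X
  · have hshift : shiftX hX ⟨_, h⟩ = x := Subtype.ext (shiftMap_prepend_singleton b x)
    rw [compCons_apply, dif_pos h, cylUVsub_cons hX]
    split_ifs with hbc
    · subst hbc
      simp [indicator_apply, hshift, mem_cylUVsub_nil, h]
    · simp [hbc]
  · split_ifs <;> simp [compCons_apply, h, indicator_apply, mem_cylUVsub_nil]

theorem compCons_mul_indicator_cylUVsub_singleton (b : A) (f : X → ℂ) :
    compCons X b f * (CylUVsub X [b] []).indicator 1 = compCons X b f := by
  funext x
  by_cases h : prepend [b] x ∈ X <;> simp [compCons_apply, h, mem_cylUVsub_nil]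

variable (X) in
def cylinderAlgebra : Set (X → ℂ) :=
  closedStarAdjoin (range fun p : List A × List A => (CylUVsub X p.1 p.2).indicator 1)

theorem indicator_mem_cylinderAlgebra (u v : List A) :
    (CylUVsub X u v).indicator 1 ∈ cylinderAlgebra X :=
  subset_closedStarAdjoin ⟨(u, v), rfl⟩

theorem isClosedStarSubalg_cylinderAlgebra : IsClosedStarSubalg (cylinderAlgebra X) :=
  isClosedStarSubalg_closedStarAdjoin <| forall_mem_range.2 fun _ =>
    ⟨1, fun _ => (norm_indicator_le_norm_self 1 _).trans (by simp)⟩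

theorem one_mem_cylinderAlgebra : (1 : X → ℂ) ∈ cylinderAlgebra X := by
  simpa [cylUVsub_nil_nil] using indicator_mem_cylinderAlgebra (X := X) [] []

variable (X) in
noncomputable abbrev cylinderStarSubalgebra : StarSubalgebra ℂ (X → ℂ) :=
  isClosedStarSubalg_cylinderAlgebra.toStarSubalgebra one_mem_cylinderAlgebra

include hX in
theorem compCons_mem_cylinderAlgebra (b : A) {f : X → ℂ} (hf : f ∈ cylinderAlgebra X) :
    compCons X b f ∈ cylinderAlgebra X := by
  refine map_mem_closedStarAdjoin isClosedStarSubalg_cylinderAlgebra (compCons X b)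
    (fun _ _ => norm_compCons_apply_le) (forall_mem_range.2 fun ⟨u, v⟩ => ?_) hf
  change compCons X b _ ∈ cylinderStarSubalgebra X
  cases v with
  | nil =>
    rw [compCons_indicator_cylUVsub_nil]
    exact mul_mem (indicator_mem_cylinderAlgebra _ _) (indicator_mem_cylinderAlgebra _ _)
  | cons c w =>
    rw [compCons_indicator_cylUVsub_cons hX]
    split_ifs
    · exact mul_mem (indicator_mem_cylinderAlgebra _ _) (indicator_mem_cylinderAlgebra _ _)
    · exact zero_mem _

theorem isClopen_coord [TopologicalSpace A] [DiscreteTopology A] (n : ℕ) (a : A) :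
    IsClopen {z : X | (z : ℕ → A) n = a} :=
  (isClopen_discrete {a}).preimage ((continuous_apply n).comp continuous_subtype_val)

section Fintype

variable [Fintype A]

theorem alphaX_indicator_cylUVsub (u v : List A) :
    alphaX hX ((CylUVsub X u v).indicator 1) = ∑ a, (CylUVsub X u (a :: v)).indicator 1 := by
  simp_rw [indicator_cylUVsub_cons hX, ← Finset.sum_mul]
  convert (one_mul _).symm
  funext z
  simp [Finset.sum_apply, indicator_apply]

theorem alphaX_mem_cylinderAlgebra {f : X → ℂ} (hf : f ∈ cylinderAlgebra X) :
    alphaX hX f ∈ cylinderAlgebra X := by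
  refine map_mem_closedStarAdjoin isClosedStarSubalg_cylinderAlgebra (alphaHom hX)
    (fun _ _ hf x => hf _) (forall_mem_range.2 fun p => ?_) hf
  change alphaX hX ((CylUVsub X p.1 p.2).indicator 1) ∈ cylinderStarSubalgebra X
  rw [alphaX_indicator_cylUVsub]
  exact sum_mem fun a _ => indicator_mem_cylinderAlgebra _ _

include hX in
theorem indicator_coord_mem_cylinderAlgebra (n : ℕ) (a : A) :
    {z : X | (z : ℕ → A) n = a}.indicator 1 ∈ cylinderAlgebra X := by
  induction n with
  | zero =>
    simpa [cylUVsub_cons hX, cylUVsub_nil_nil] using indicator_mem_cylinderAlgebra (X := X) [] [a]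
  | succ n ih => exact alphaX_mem_cylinderAlgebra hX ih

variable (X) in
noncomputable def consLetters (x : X) : Finset A :=
  Finset.univ.filter fun b => prepend [b] x ∈ X

variable (X) in
/-- `1 / #σ⁻¹{x}`; the junk value `0⁻¹ = 0` covers `x ∉ σ(X)`. -/
noncomputable def transferWeight (x : X) : ℂ := ((consLetters X x).card : ℂ)⁻¹

theorem bijOn_preimage_shiftMap (x : X) :
    BijOn (fun y : X => (y : ℕ → A) 0) {y : X | shiftMap (y : ℕ → A) = x} (consLetters X x) := by
  refine ⟨fun y hy => ?_, fun y hy y' hy' h => ?_, fun b hb => ?_⟩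
  · have hy' : prepend [(y : ℕ → A) 0] x = y := by
      rw [← show shiftMap (y : ℕ → A) = x from hy, prepend_singleton_shiftMap]
    simp [consLetters, hy', y.2]
  · rw [Subtype.ext_iff, ← prepend_singleton_shiftMap (y : ℕ → A),
      ← prepend_singleton_shiftMap (y' : ℕ → A)]
    simp_all
  · simp only [consLetters, Finset.coe_filter, Finset.mem_univ, true_and, mem_ofPred_eq] at hb
    exact ⟨⟨_, hb⟩, shiftMap_prepend_singleton b x, rfl⟩

theorem transferLX_eq_mul_sum (f : X → ℂ) :
    transferLX X f = transferWeight X * ∑ b, compCons X b f := by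
  funext x
  have hbij := bijOn_preimage_shiftMap x
  have hsum : ∑ᶠ y ∈ {y : X | shiftMap (y : ℕ → A) = x}, f y = ∑ b, compCons X b f x := by
    rw [finsum_mem_eq_of_bijOn _ hbij (g := fun b => compCons X b f x), finsum_mem_coe_finset,
      consLetters, Finset.sum_filter_of_ne]
    · intro b _ hb
      by_contra h
      simp [compCons_apply, h] at hb
    · intro y hy
      have hy' : prepend [(y : ℕ → A) 0] x = y := by
        rw [← show shiftMap (y : ℕ → A) = x from hy, prepend_singleton_shiftMap]
      rw [compCons_apply, dif_pos (hy' ▸ y.2)]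
      congr 1
      exact Subtype.ext hy'.symm
  have hcard := hbij.ncard_eq.trans (ncard_coe_finset _)
  rw [transferLX, Pi.mul_apply, Finset.sum_apply, transferWeight, hsum, hcard]
  split_ifs with hne
  · rfl
  · rw [not_nonempty_iff_eq_empty.1 hne, ncard_empty] at hcard
    simp [← hcard]

theorem transferWeight_ne_zero {x : X} {c : A} (h : prepend [c] x ∈ X) :
    transferWeight X x ≠ 0 :=
  inv_ne_zero (Nat.cast_ne_zero.2 (Finset.card_ne_zero_of_mem (by simpa [consLetters] using h)))

theorem transferWeight_mem_cylinderAlgebra : transferWeight X ∈ cylinderAlgebra X := by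
  have hcard : (fun x => ((consLetters X x).card : ℂ)) = ∑ b, (CylUVsub X [b] []).indicator 1 := by
    funext x
    simp [consLetters, Finset.sum_apply, indicator_apply, mem_cylUVsub_nil]
  have hmem : (fun x => ((consLetters X x).card : ℂ)) ∈ cylinderAlgebra X := by
    change _ ∈ cylinderStarSubalgebra X
    rw [hcard]
    exact sum_mem fun b _ => indicator_mem_cylinderAlgebra _ _
  exact isClosedStarSubalg_cylinderAlgebra.comp_mem_of_finite_range one_mem_cylinderAlgebra hmem
    ((finite_range fun T : Finset A => (T.card : ℂ)).subset
      (range_subset_iff.2 fun x => mem_range_self _))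
    fun t => t⁻¹

include hX in
theorem transferLX_mem_cylinderAlgebra {f : X → ℂ} (hf : f ∈ cylinderAlgebra X) :
    transferLX X f ∈ cylinderAlgebra X := by
  change _ ∈ cylinderStarSubalgebra X
  rw [transferLX_eq_mul_sum]
  exact mul_mem transferWeight_mem_cylinderAlgebra
    (sum_mem fun b _ => compCons_mem_cylinderAlgebra hX b hf)

include hX in
theorem transferLX_mul_indicator_cylUVsub_cons (c : A) (w : List A) (e : X → ℂ) :
    transferLX X (e * (CylUVsub X [] (c :: w)).indicator 1) =
      transferWeight X * compCons X c e * (CylUVsub X [] w).indicator 1 := by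
  simp_rw [transferLX_eq_mul_sum, map_mul, compCons_indicator_cylUVsub_cons hX, mul_ite, mul_zero,
    Finset.sum_ite_eq', Finset.mem_univ, if_true]
  conv_rhs => rw [← compCons_mul_indicator_cylUVsub_singleton c e]
  ring

include hX in
theorem support_transferLX_iterate (w : List A) (e : X → ℂ) :
    Function.support ((transferLX X)^[w.length] (e * (CylUVsub X [] w).indicator 1)) =
      {x : X | ∃ h : prepend w x ∈ X, e ⟨_, h⟩ ≠ 0} := by
  induction w generalizing e with
  | nil => simp [cylUVsub_nil_nil, Function.support]
  | cons c w ih =>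
    rw [List.length_cons, Function.iterate_succ_apply, transferLX_mul_indicator_cylUVsub_cons hX,
      ih]
    ext x
    simp only [mem_ofPred_eq, Pi.mul_apply, compCons_apply, prepend_cons _ w]
    constructor
    · rintro ⟨hw, hne⟩
      by_cases hcw : prepend [c] (prepend w x) ∈ X
      · rw [dif_pos hcw] at hne
        exact ⟨hcw, right_ne_zero_of_mul hne⟩
      · rw [dif_neg hcw, mul_zero] at hne
        exact absurd rfl hne
    · rintro ⟨hcw, hne⟩
      have hw : prepend w x ∈ X := by simpa using hX _ hcw
      refine ⟨hw, ?_⟩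
      rw [dif_pos hcw]
      exact mul_ne_zero (transferWeight_ne_zero (x := ⟨_, hw⟩) hcw) hne

theorem finite_range_transferLX {f : X → ℂ} (hf : (range f).Finite) :
    (range (transferLX X f)).Finite := by
  refine ((finite_univ.prod (Finite.pi fun _ => hf.insert 0)).image
    fun p : Finset A × (A → ℂ) => (p.1.card : ℂ)⁻¹ * ∑ b, p.2 b).subset ?_
  rintro _ ⟨x, rfl⟩
  refine ⟨(consLetters X x, fun b => compCons X b f x), ⟨trivial, fun b _ => ?_⟩, ?_⟩
  · by_cases h : prepend [b] x ∈ X <;> simp [compCons_apply, h]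
  · simp [transferLX_eq_mul_sum, transferWeight, Finset.sum_apply]

variable [TopologicalSpace A] [DiscreteTopology A]

include hX in
theorem continuous_mem_cylinderAlgebra (hXclosed : IsClosed X) {f : X → ℂ} (hf : Continuous f) :
    f ∈ cylinderAlgebra X := by
  have : CompactSpace X := isCompact_iff_compactSpace.1 hXclosed.isCompact
  refine isClosedStarSubalg_cylinderAlgebra.continuous_mem one_mem_cylinderAlgebra
    (fun y y' hyy' => ?_) hf
  obtain ⟨n, hn⟩ : ∃ n, (y : ℕ → A) n ≠ (y' : ℕ → A) n := by
    by_contra! h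
    exact hyy' (Subtype.ext (funext h))
  refine ⟨⟨{z : X | (z : ℕ → A) n = (y : ℕ → A) n}.indicator 1,
    (isClopen_coord n _).continuous_indicator continuous_const⟩,
    indicator_coord_mem_cylinderAlgebra hX n _, ?_⟩
  simp [hn.symm]

theorem indicator_cylUVsub_mem {D : Set (X → ℂ)} (hD : IsClosedStarSubalg D)
    (hcont : ∀ f : X → ℂ, Continuous f → f ∈ D) (hα : ∀ f ∈ D, alphaX hX f ∈ D)
    (hL : ∀ f ∈ D, transferLX X f ∈ D) (u v : List A) : (CylUVsub X u v).indicator 1 ∈ D := by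
  have h1 : (1 : X → ℂ) ∈ D := hcont 1 continuous_const
  have hcoord : ∀ a, {z : X | (z : ℕ → A) 0 = a}.indicator 1 ∈ D := fun a =>
    hcont _ ((isClopen_coord 0 a).continuous_indicator continuous_const)
  have hcyl : (CylUVsub X [] u).indicator 1 ∈ D :=
    indicator_cylUVsub_mem_of_nil hX hD.2.2.1 hα hcoord
      (by rwa [cylUVsub_nil_nil, indicator_univ]) u
  refine indicator_cylUVsub_mem_of_nil hX hD.2.2.1 hα hcoord ?_ v
  set F := (transferLX X)^[u.length] (1 * (CylUVsub X [] u).indicator 1)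
  have hF : F ∈ D := (mapsTo_iff_subset_preimage.2 hL).iterate _ (by rwa [one_mul])
  have hFfin : (range F).Finite :=
    (show MapsTo (transferLX X) {f | (range f).Finite} {f | (range f).Finite} from
      fun _ => finite_range_transferLX).iterate _
      ((toFinite {0, 1}).subset (range_subset_iff.2 fun x => by
        by_cases hx : x ∈ CylUVsub X [] u <;> simp [hx]))
  have hsupp : Function.support F = CylUVsub X u [] := by
    rw [support_transferLX_iterate hX]
    ext x
    simp [mem_cylUVsub_nil]
  rw [← hsupp]
  exact hD.indicator_support_mem h1 hF hFfin

end Fintype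

end ShiftSpace

open ShiftSpace

theorem DX_eq_algebra_generated_by_indicators_general {A : Type*} [Fintype A]
    [TopologicalSpace A] [DiscreteTopology A]
    (X : Set (ℕ → A)) (hXclosed : IsClosed X) (hX : ∀ x ∈ X, shiftMap x ∈ X) :
    DX X hX =
      ⋂₀ {D | IsClosedStarSubalg D ∧
        ∀ u v : List A,
          Set.indicator (CylUVsub X u v) (fun _ => (1 : ℂ)) ∈ D} := by
  have hE : ⋂₀ {D | IsClosedStarSubalg D ∧ ∀ u v : List A,
      Set.indicator (CylUVsub X u v) (fun _ => (1 : ℂ)) ∈ D} = cylinderAlgebra X := by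
    simp only [cylinderAlgebra, closedStarAdjoin, range_subset_iff, Prod.forall]
    rfl
  rw [hE]
  refine Subset.antisymm (sInter_subset_of_mem ⟨isClosedStarSubalg_cylinderAlgebra,
    fun f => continuous_mem_cylinderAlgebra hX hXclosed, fun f => alphaX_mem_cylinderAlgebra hX,
    fun f => transferLX_mem_cylinderAlgebra hX⟩) ?_
  exact subset_sInter fun D ⟨hD, hcont, hα, hL⟩ => closedStarAdjoin_subset hD
    (range_subset_iff.2 fun p => indicator_cylUVsub_mem hX hD hcont hα hL p.1 p.2)

/-- `D_X` is the smallest norm-closed `*`-subalgebra of `ℓ∞(X)`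
containing the indicator functions `1_{C(u,v)}` for all words `u, v`. -/
theorem DX_eq_algebra_generated_by_indicators {A : Type*} [Fintype A] [Nonempty A]
    [TopologicalSpace A] [DiscreteTopology A]
    (X : Set (ℕ → A)) (hXclosed : IsClosed X) (hX : ∀ x ∈ X, shiftMap x ∈ X) :
    DX X hX =
      ⋂₀ {D | IsClosedStarSubalg D ∧
        ∀ u v : List A,
          Set.indicator (CylUVsub X u v) (fun _ => (1 : ℂ)) ∈ D} :=
  DX_eq_algebra_generated_by_indicators_general X hXclosed hX
end

section
/- Let X be a one-sided shift space over a finite alphabet 𝔞. For all words u, v ∈ 𝔞^* the following identities of functions on X hold pointwise: (i) if v = v₁⋯v_n with n ≥ 1, then L(1_{C(u,v)}) = (∑_{a∈𝔞} (L(1_{C(a)}))²) · 1_{C(v₁,ε)} · 1_{C(u, v₂⋯v_n)} (where v₂⋯v_n = ε when n = 1); (ii) L(1_{C(u,ε)}) = (∑_{a∈𝔞} (L(1_{C(a)}))²) · (∑_{a∈𝔞} 1_{C(ua,ε)}), where ua denotes the word u followed by the letter a. -/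
open scoped Classical

/-- The set `C(u,v) = {vx ∈ X : ux ∈ X}`. -/
def CylUV {A : Type*} (X : Set (ℕ → A)) (u v : List A) : Set (ℕ → A) :=
  {z | z ∈ X ∧ ∃ x : ℕ → A, z = prepend v x ∧ prepend u x ∈ X}

/-- The transfer operator of a one-sided shift space `X`:
`(L f)(x) = (1/#σ⁻¹{x}) ∑_{y ∈ σ⁻¹{x}} f(y)` if `x ∈ σ(X)`, and `0` otherwise. -/
noncomputable def transferL {A : Type*} (X : Set (ℕ → A)) (f : (ℕ → A) → ℂ)
    (x : ℕ → A) : ℂ :=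
  if ({y | y ∈ X ∧ shiftMap y = x}).Nonempty then
    (({y | y ∈ X ∧ shiftMap y = x}).ncard : ℂ)⁻¹ *
      ∑ᶠ y ∈ {y | y ∈ X ∧ shiftMap y = x}, f y
  else 0

/-!
A point of `σ⁻¹{x}` is `ax` for a letter `a` with `ax ∈ X`, so with `P = {a | ax ∈ X}` we get
`(L f)(x) = |P|⁻¹ ∑_{a ∈ P} f(ax)`. In particular `L(1_{C(a)})(x) = |P|⁻¹ [a ∈ P]`, whence
`∑_a (L(1_{C(a)})(x))² = |P|⁻¹`, and both identities reduce to counting the letters `a ∈ P` with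
`ax ∈ C(u,v)`: for `v = bw` this is `a = b` and `x ∈ C(u,w)`, for `v = ε` it is `uax ∈ X`.
-/

open Finset

section Prepend

variable {A : Type*}

@[simp]
lemma prepend_nil (x : ℕ → A) : prepend [] x = x := by
  funext i; simp [prepend]

@[simp]
lemma prepend_cons_zero (a : A) (u : List A) (x : ℕ → A) : prepend (a :: u) x 0 = a := by
  simp [prepend]

lemma prepend_cons_succ (a : A) (u : List A) (x : ℕ → A) (i : ℕ) :
    prepend (a :: u) x (i + 1) = prepend u x i := by
  by_cases h : i < u.length
  · simp [prepend, h]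
  · simp [prepend, h, Nat.add_sub_add_right]

@[simp]
lemma shiftMap_prepend_cons (a : A) (u : List A) (x : ℕ → A) :
    shiftMap (prepend (a :: u) x) = prepend u x :=
  funext (prepend_cons_succ a u x)

lemma prepend_append (u v : List A) (x : ℕ → A) :
    prepend (u ++ v) x = prepend u (prepend v x) := by
  induction u with
  | nil => simp
  | cons a u ih =>
    funext i
    cases i with
    | zero => simp
    | succ i => simp only [List.cons_append, prepend_cons_succ, ih]

lemma prepend_head_shiftMap (y : ℕ → A) : prepend [y 0] (shiftMap y) = y := by
  funext i
  cases i with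
  | zero => simp
  | succ i => simp [prepend_cons_succ, shiftMap]

lemma prepend_singleton_inj {a b : A} {x z : ℕ → A} :
    prepend [a] x = prepend [b] z ↔ a = b ∧ x = z := by
  refine ⟨fun h => ⟨?_, ?_⟩, fun ⟨hab, hxz⟩ => hab ▸ hxz ▸ rfl⟩
  · simpa using congrFun h 0
  · simpa using congrArg shiftMap h

lemma mem_of_prepend_mem {X : Set (ℕ → A)} (hXinv : ∀ x ∈ X, shiftMap x ∈ X) :
    ∀ (u : List A) (y : ℕ → A), prepend u y ∈ X → y ∈ X
  | [], y, h => by simpa using h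
  | a :: u, y, h => mem_of_prepend_mem hXinv u y (by simpa using hXinv _ h)

end Prepend

section Transfer

variable {A : Type*} [Fintype A]

noncomputable def preLetters (X : Set (ℕ → A)) (x : ℕ → A) : Finset A :=
  {a | prepend [a] x ∈ X}

lemma mem_preLetters {X : Set (ℕ → A)} {x : ℕ → A} {a : A} :
    a ∈ preLetters X x ↔ prepend [a] x ∈ X := by
  simp [preLetters]

lemma fiber_shiftMap_eq_image (X : Set (ℕ → A)) (x : ℕ → A) :
    {y | y ∈ X ∧ shiftMap y = x} = (fun a => prepend [a] x) '' ↑(preLetters X x) := by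
  ext y
  constructor
  · rintro ⟨hyX, rfl⟩
    exact ⟨y 0, by rwa [mem_coe, mem_preLetters, prepend_head_shiftMap], prepend_head_shiftMap y⟩
  · rintro ⟨a, ha, rfl⟩
    exact ⟨mem_preLetters.1 ha, by simp⟩

lemma transferL_eq_sum (X : Set (ℕ → A)) (f : (ℕ → A) → ℂ) (x : ℕ → A) :
    transferL X f x =
      (#(preLetters X x) : ℂ)⁻¹ * ∑ a ∈ preLetters X x, f (prepend [a] x) := by
  have hinj : Set.InjOn (fun a => prepend [a] x) ↑(preLetters X x) :=
    fun a _ b _ h => (prepend_singleton_inj.1 h).1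
  rw [transferL, fiber_shiftMap_eq_image, Set.image_nonempty, coe_nonempty]
  split_ifs with hne
  · rw [hinj.ncard_image, Set.ncard_coe_finset, finsum_mem_image hinj, finsum_mem_coe_finset]
  · simp [not_nonempty_iff_eq_empty.1 hne]

lemma indicator_prepend_mem_Cyl_singleton (X : Set (ℕ → A)) (a b : A) {x : ℕ → A}
    (ha : a ∈ preLetters X x) :
    Set.indicator (Cyl X [b]) (fun _ => (1 : ℂ)) (prepend [a] x) = if a = b then 1 else 0 := by
  have hmem : prepend [a] x ∈ Cyl X [b] ↔ a = b := by
    simp [Cyl, mem_preLetters.1 ha]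
  simp only [Set.indicator_apply, hmem]

lemma transferL_indicator_Cyl_singleton (X : Set (ℕ → A)) (b : A) (x : ℕ → A) :
    transferL X (Set.indicator (Cyl X [b]) fun _ => (1 : ℂ)) x =
      (#(preLetters X x) : ℂ)⁻¹ * if b ∈ preLetters X x then 1 else 0 := by
  rw [transferL_eq_sum, sum_congr rfl fun a ha => indicator_prepend_mem_Cyl_singleton X a b ha,
    sum_ite_eq']

lemma sum_sq_transferL_indicator_Cyl_singleton (X : Set (ℕ → A)) (x : ℕ → A) :
    ∑ b : A, (transferL X (Set.indicator (Cyl X [b]) fun _ => (1 : ℂ)) x) ^ 2 =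
      (#(preLetters X x) : ℂ)⁻¹ := by
  set n : ℂ := (#(preLetters X x) : ℂ)
  calc ∑ b : A, (transferL X (Set.indicator (Cyl X [b]) fun _ => (1 : ℂ)) x) ^ 2
      = ∑ b : A, n⁻¹ ^ 2 * if b ∈ preLetters X x then 1 else 0 := by
        refine sum_congr rfl fun b _ => ?_
        rw [transferL_indicator_Cyl_singleton]
        split_ifs <;> ring
    _ = n⁻¹ ^ 2 * n := by rw [← mul_sum, sum_boole, filter_mem_eq_inter, univ_inter]
    _ = n⁻¹ := by
        rcases eq_or_ne n 0 with hn | hn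
        · simp [hn]
        · field_simp

end Transfer

section Counting

variable {A : Type*} {X : Set (ℕ → A)}

lemma mem_CylUV_nil {u : List A} {z : ℕ → A} :
    z ∈ CylUV X u [] ↔ z ∈ X ∧ prepend u z ∈ X := by
  simp [CylUV]

lemma prepend_mem_CylUV_cons {u w : List A} {a b : A} {x : ℕ → A} (hx : x ∈ X) :
    prepend [a] x ∈ CylUV X u (b :: w) ↔
      a = b ∧ prepend [a] x ∈ X ∧ x ∈ CylUV X u w := by
  have hsplit : ∀ x', prepend (b :: w) x' = prepend [b] (prepend w x') := fun x' =>
    prepend_append [b] w x'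
  simp only [CylUV, Set.mem_ofPred_eq, hsplit, prepend_singleton_inj]
  constructor
  · rintro ⟨hax, x', ⟨rfl, hxw⟩, hux'⟩
    exact ⟨rfl, hax, hx, x', hxw, hux'⟩
  · rintro ⟨rfl, hax, -, x', hxw, hux'⟩
    exact ⟨hax, x', ⟨rfl, hxw⟩, hux'⟩

variable [Fintype A]

lemma indicator_CylUV_singleton_nil {b : A} {x : ℕ → A} (hx : x ∈ X) :
    Set.indicator (CylUV X [b] []) (fun _ => (1 : ℂ)) x =
      if b ∈ preLetters X x then 1 else 0 := by
  simp only [Set.indicator_apply, mem_CylUV_nil, mem_preLetters, hx, true_and]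

lemma sum_indicator_CylUV_cons (u w : List A) (b : A) {x : ℕ → A} (hx : x ∈ X) :
    ∑ a ∈ preLetters X x, Set.indicator (CylUV X u (b :: w)) (fun _ => (1 : ℂ)) (prepend [a] x) =
      Set.indicator (CylUV X [b] []) (fun _ => (1 : ℂ)) x *
        Set.indicator (CylUV X u w) (fun _ => (1 : ℂ)) x := by
  have hterm : ∀ a ∈ preLetters X x,
      Set.indicator (CylUV X u (b :: w)) (fun _ => (1 : ℂ)) (prepend [a] x) =
        if a = b then Set.indicator (CylUV X u w) (fun _ => (1 : ℂ)) x else 0 := by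
    intro a ha
    simp only [Set.indicator_apply, prepend_mem_CylUV_cons hx, mem_preLetters.1 ha, true_and]
    split_ifs <;> simp_all
  rw [sum_congr rfl hterm, sum_ite_eq', indicator_CylUV_singleton_nil hx, ite_mul, one_mul,
    zero_mul]

lemma sum_indicator_CylUV_nil (hXinv : ∀ x ∈ X, shiftMap x ∈ X) (u : List A) {x : ℕ → A}
    (hx : x ∈ X) :
    ∑ a ∈ preLetters X x, Set.indicator (CylUV X u []) (fun _ => (1 : ℂ)) (prepend [a] x) =
      ∑ a : A, Set.indicator (CylUV X (u ++ [a]) []) (fun _ => (1 : ℂ)) x := by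
  -- letters outside `preLetters X x` contribute nothing, since `uax ∈ X` forces `ax ∈ X`
  refine sum_subset_zero_on_sdiff (subset_univ _) (fun a ha => ?_) (fun a ha => ?_)
  · refine Set.indicator_of_notMem (fun h => ?_) _
    rw [mem_CylUV_nil, prepend_append] at h
    exact (mem_sdiff.1 ha).2 (mem_preLetters.2 (mem_of_prepend_mem hXinv u _ h.2))
  · simp only [Set.indicator_apply, mem_CylUV_nil, prepend_append, mem_preLetters.1 ha, hx,
      true_and]

end Counting

theorem transferL_indicator_formulas_general {A : Type*} [Fintype A]
    (X : Set (ℕ → A)) (hXinv : ∀ x ∈ X, shiftMap x ∈ X) :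
    ∀ u v : List A, ∀ x ∈ X,
      (∀ hv : v ≠ [],
        transferL X (Set.indicator (CylUV X u v) fun _ => (1 : ℂ)) x =
          (∑ a : A, (transferL X (Set.indicator (Cyl X [a]) fun _ => (1 : ℂ)) x) ^ 2) *
            (Set.indicator (CylUV X [v.head hv] []) (fun _ => (1 : ℂ)) x *
              Set.indicator (CylUV X u v.tail) (fun _ => (1 : ℂ)) x)) ∧
      (transferL X (Set.indicator (CylUV X u []) fun _ => (1 : ℂ)) x =
        (∑ a : A, (transferL X (Set.indicator (Cyl X [a]) fun _ => (1 : ℂ)) x) ^ 2) *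
          ∑ a : A, Set.indicator (CylUV X (u ++ [a]) []) (fun _ => (1 : ℂ)) x) := by
  intro u v x hx
  rw [sum_sq_transferL_indicator_Cyl_singleton, transferL_eq_sum, transferL_eq_sum,
    sum_indicator_CylUV_nil hXinv u hx]
  refine ⟨fun hv => ?_, rfl⟩
  obtain ⟨b, w, rfl⟩ := List.exists_cons_of_ne_nil hv
  rw [sum_indicator_CylUV_cons u w b hx, List.head_cons, List.tail_cons]

/-- the identities
(i) `L(1_{C(u,v)}) = (∑_a (L(1_{C(a)}))²)·1_{C(v₁,ε)}·1_{C(u,v₂⋯v_n)}` for `v ≠ ε`, and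
(ii) `L(1_{C(u,ε)}) = (∑_a (L(1_{C(a)}))²)·(∑_a 1_{C(ua,ε)})`, pointwise on `X`. -/
theorem transferL_indicator_formulas {A : Type*} [Fintype A] [Nonempty A]
    [TopologicalSpace A] [DiscreteTopology A]
    (X : Set (ℕ → A)) (hXclosed : IsClosed X) (hXinv : ∀ x ∈ X, shiftMap x ∈ X) :
    ∀ u v : List A, ∀ x ∈ X,
      (∀ hv : v ≠ [],
        transferL X (Set.indicator (CylUV X u v) fun _ => (1 : ℂ)) x =
          (∑ a : A, (transferL X (Set.indicator (Cyl X [a]) fun _ => (1 : ℂ)) x) ^ 2) *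
            (Set.indicator (CylUV X [v.head hv] []) (fun _ => (1 : ℂ)) x *
              Set.indicator (CylUV X u v.tail) (fun _ => (1 : ℂ)) x)) ∧
      (transferL X (Set.indicator (CylUV X u []) fun _ => (1 : ℂ)) x =
        (∑ a : A, (transferL X (Set.indicator (Cyl X [a]) fun _ => (1 : ℂ)) x) ^ 2) *
          ∑ a : A, Set.indicator (CylUV X (u ++ [a]) []) (fun _ => (1 : ℂ)) x) :=
  transferL_indicator_formulas_general X hXinv
end

section
/- Let X be a one-sided shift space over a finite alphabet 𝔞, let l ∈ ℕ, let j ∈ {1,…,m(l)}, h ∈ {1,…,m(l+2)} and a ∈ 𝔞. If ∅ ≠ aE_h^{l+2} ⊆ E_j^l, then there exists exactly one i ∈ {1,…,m(l+1)} such that E_i^{l+1} ⊆ E_j^l and ∅ ≠ aE_h^{l+2} ⊆ E_i^{l+1}, and there exists exactly one i' ∈ {1,…,m(l+1)} such that E_h^{l+2} ⊆ E_{i'}^{l+1} and ∅ ≠ aE_{i'}^{l+1} ⊆ E_j^l. If aE_h^{l+2} = ∅ or aE_h^{l+2} ⊈ E_j^l, then no such i exists and no such i' exists. -/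
open scoped Classical

/-- `P_l(x) = {u ∈ 𝔞_l : ux ∈ X}`, the past of order `l` of `x ∈ X`. -/
def pastSet {A : Type*} (X : Set (ℕ → A)) (l : ℕ) (x : ℕ → A) : Set (List A) :=
  {u | u.length ≤ l ∧ prepend u x ∈ X}

/-- The `l`-past equivalence class `[x]_l = {y ∈ X : P_l(y) = P_l(x)}`. -/
def pastClass {A : Type*} (X : Set (ℕ → A)) (l : ℕ) (x : ℕ → A) : Set (ℕ → A) :=
  {y | y ∈ X ∧ pastSet X l y = pastSet X l x}

/-- The (finite) collection `{E_1^l, …, E_{m(l)}^l}` of `l`-past equivalence classes. -/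
def classes {A : Type*} (X : Set (ℕ → A)) (l : ℕ) : Set (Set (ℕ → A)) :=
  {E | ∃ x ∈ X, E = pastClass X l x}

/-- `uE = {ux : x ∈ E} ∩ X` for a word `u` and a set `E ⊆ X`. -/
def wordMulSet {A : Type*} (X : Set (ℕ → A)) (u : List A) (E : Set (ℕ → A)) :
    Set (ℕ → A) :=
  {z | z ∈ X ∧ ∃ x ∈ E, z = prepend u x}

/-- `M_k^l`: the collection of `l`-past equivalence classes `E` with `P_k(E) ≠ ∅`. -/
def Mcl {A : Type*} (X : Set (ℕ → A)) (k l : ℕ) : Set (Set (ℕ → A)) :=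
  {E | E ∈ classes X l ∧ ∃ x ∈ E, (pastSet X k x).Nonempty}

/-- The matrix entry `I_l(i,j)`: `1` if `E_i^{l+1} ⊆ E_j^l` and `0` otherwise. -/
noncomputable def Imat {A : Type*} (E F : Set (ℕ → A)) : ℤ :=
  if E ⊆ F then 1 else 0

/-- The matrix entry `A_l(i,j,a)`: `1` if `∅ ≠ aE_i^{l+1} ⊆ E_j^l` and `0` otherwise. -/
noncomputable def Amat {A : Type*} (X : Set (ℕ → A)) (a : A)
    (E F : Set (ℕ → A)) : ℤ :=
  if (wordMulSet X [a] E).Nonempty ∧ wordMulSet X [a] E ⊆ F then 1 else 0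

lemma classes_finite {A : Type*} [Finite A] (X : Set (ℕ → A)) (l : ℕ) :
    (classes X l).Finite := by
  have h1 : {u : List A | u.length ≤ l}.Finite := List.finite_length_le A l
  have h2 : {P : Set (List A) | P ⊆ {u | u.length ≤ l}}.Finite :=
    h1.finite_subsets
  refine Set.Finite.subset
    (h2.image (fun P => {y | y ∈ X ∧ pastSet X l y = P})) ?_
  rintro E ⟨x, hx, rfl⟩
  exact ⟨pastSet X l x, fun u hu => hu.1, rfl⟩

instance McFinite {A : Type*} [Finite A] (X : Set (ℕ → A)) (k l : ℕ) :
    Finite ↥(Mcl X k l) :=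
  ((classes_finite X l).subset (fun _ hE => hE.1)).to_subtype

/-- The group homomorphism between free abelian groups determined by the
matrix `T`: the basis vector `e_j` is sent to `∑_i T i j • e_i`. -/
noncomputable def matHom {ι κ : Type*} [Finite κ] (T : κ → ι → ℤ) :
    (ι →₀ ℤ) →+ (κ →₀ ℤ) :=
  Finsupp.liftAddHom fun j =>
    zmultiplesHom _ (Finsupp.equivFunOnFinite.symm fun i => T i j)

/-- The homomorphism `I_k^l : ℤ^{M_k^l} → ℤ^{M_k^{l+1}}`,
`e_j ↦ ∑_{i ∈ M_k^{l+1}} I_l(i,j) e_i`. -/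
noncomputable def Ihom {A : Type*} [Finite A] (X : Set (ℕ → A)) (k l : ℕ) :
    (↥(Mcl X k l) →₀ ℤ) →+ (↥(Mcl X k (l + 1)) →₀ ℤ) :=
  matHom fun i j => Imat (i : Set (ℕ → A)) (j : Set (ℕ → A))

/-- The homomorphism `A_k^l : ℤ^{M_k^l} → ℤ^{M_{k+1}^{l+1}}`,
`e_j ↦ ∑_{i ∈ M_{k+1}^{l+1}} ∑_{a ∈ 𝔞} A_l(i,j,a) e_i`. -/
noncomputable def Ahom {A : Type*} [Fintype A] (X : Set (ℕ → A)) (k l : ℕ) :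
    (↥(Mcl X k l) →₀ ℤ) →+ (↥(Mcl X (k + 1) (l + 1)) →₀ ℤ) :=
  matHom fun i j => ∑ a : A, Amat X a (i : Set (ℕ → A)) (j : Set (ℕ → A))

lemma mem_pastClass_self {A : Type*} (X : Set (ℕ → A)) (l : ℕ) {x : ℕ → A} (hx : x ∈ X) :
    x ∈ pastClass X l x := ⟨hx, rfl⟩

lemma pastClass_eq_of_mem {A : Type*} (X : Set (ℕ → A)) (l : ℕ) {x y : ℕ → A}
    (h : y ∈ pastClass X l x) : pastClass X l y = pastClass X l x := by
  ext z; constructor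
  · rintro ⟨hz, hzy⟩; exact ⟨hz, hzy.trans h.2⟩
  · rintro ⟨hz, hzx⟩; exact ⟨hz, hzx.trans h.2.symm⟩

lemma pastSet_eq_inter {A : Type*} (X : Set (ℕ → A)) (l : ℕ) (x : ℕ → A) :
    pastSet X l x = pastSet X (l + 1) x ∩ {u | u.length ≤ l} := by
  ext u
  simp only [pastSet, Set.mem_setOf_eq, Set.mem_inter_iff]
  constructor
  · exact fun ⟨h1, h2⟩ => ⟨⟨h1.trans (Nat.le_succ l), h2⟩, h1⟩
  · exact fun ⟨⟨_, h2⟩, h1⟩ => ⟨h1, h2⟩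

lemma pastClass_mono {A : Type*} (X : Set (ℕ → A)) (l : ℕ) {x y : ℕ → A}
    (h : y ∈ pastClass X (l + 1) x) : y ∈ pastClass X l x := by
  refine ⟨h.1, ?_⟩
  rw [pastSet_eq_inter X l y, pastSet_eq_inter X l x, h.2]

lemma prepend_single_prepend {A : Type*} (a : A) (u : List A) (x : ℕ → A) :
    prepend u (prepend [a] x) = prepend (u ++ [a]) x := by
  funext i
  simp only [prepend, List.length_append, List.length_singleton, List.get_eq_getElem]
  by_cases h1 : i < u.length
  · rw [dif_pos h1, dif_pos (by omega)]
    rw [List.getElem_append_left h1]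
  · rw [dif_neg h1]
    by_cases h2 : i = u.length
    · subst h2
      rw [dif_pos (by omega), dif_pos (by omega)]
      simp
    · rw [dif_neg (by omega), dif_neg (by omega)]
      exact congrArg x (by omega)

lemma pastSet_prepend_eq {A : Type*} (X : Set (ℕ → A)) (l : ℕ) (a : A) {x x' : ℕ → A}
    (h : pastSet X (l + 1) x = pastSet X (l + 1) x') :
    pastSet X l (prepend [a] x) = pastSet X l (prepend [a] x') := by
  have key : ∀ y : ℕ → A, ∀ u : List A, u ∈ pastSet X l (prepend [a] y) ↔
      u.length ≤ l ∧ (u ++ [a]) ∈ pastSet X (l + 1) y := by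
    intro y u
    simp only [pastSet, Set.mem_setOf_eq, prepend_single_prepend,
      List.length_append, List.length_singleton]
    constructor
    · exact fun ⟨h1, h2⟩ => ⟨h1, by omega, h2⟩
    · exact fun ⟨h1, h2, h3⟩ => ⟨h1, h3⟩
  ext u
  rw [key, key, h]

/-- let `E_j` be an `l`-past class and `E_h` an `(l+2)`-past class and
`a ∈ 𝔞`. If `∅ ≠ aE_h ⊆ E_j`, then there is exactly one `(l+1)`-past class `E_i` with
`E_i ⊆ E_j` and `∅ ≠ aE_h ⊆ E_i`, and exactly one `(l+1)`-past class `E_i'` with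
`E_h ⊆ E_i'` and `∅ ≠ aE_i' ⊆ E_j`; if `aE_h = ∅` or `aE_h ⊄ E_j`, no such class exists. -/
theorem unique_intermediate_class {A : Type*} [Fintype A] [Nonempty A]
    [TopologicalSpace A] [DiscreteTopology A]
    (X : Set (ℕ → A)) (hXclosed : IsClosed X) (hXinv : ∀ x ∈ X, shiftMap x ∈ X)
    (l : ℕ) (Ej Eh : Set (ℕ → A))
    (hj : Ej ∈ classes X l) (hh : Eh ∈ classes X (l + 2)) (a : A) :
    ((wordMulSet X [a] Eh).Nonempty ∧ wordMulSet X [a] Eh ⊆ Ej →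
      (∃! Ei : Set (ℕ → A), Ei ∈ classes X (l + 1) ∧ Ei ⊆ Ej ∧
        (wordMulSet X [a] Eh).Nonempty ∧ wordMulSet X [a] Eh ⊆ Ei) ∧
      (∃! Ei : Set (ℕ → A), Ei ∈ classes X (l + 1) ∧ Eh ⊆ Ei ∧
        (wordMulSet X [a] Ei).Nonempty ∧ wordMulSet X [a] Ei ⊆ Ej)) ∧
    (¬((wordMulSet X [a] Eh).Nonempty ∧ wordMulSet X [a] Eh ⊆ Ej) →
      (¬∃ Ei : Set (ℕ → A), Ei ∈ classes X (l + 1) ∧ Ei ⊆ Ej ∧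
        (wordMulSet X [a] Eh).Nonempty ∧ wordMulSet X [a] Eh ⊆ Ei) ∧
      (¬∃ Ei : Set (ℕ → A), Ei ∈ classes X (l + 1) ∧ Eh ⊆ Ei ∧
        (wordMulSet X [a] Ei).Nonempty ∧ wordMulSet X [a] Ei ⊆ Ej)) := by
  obtain ⟨x₀, hx₀X, rfl⟩ := hh
  have hx₀Eh : x₀ ∈ pastClass X (l + 2) x₀ := mem_pastClass_self X _ hx₀X
  constructor
  · rintro ⟨hne, hsub⟩
    obtain ⟨z, hzX, x, hxEh, rfl⟩ := hne
    have hne : (wordMulSet X [a] (pastClass X (l + 2) x₀)).Nonempty :=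
      ⟨prepend [a] x, hzX, x, hxEh, rfl⟩
    have hzEj : prepend [a] x ∈ Ej := hsub ⟨hzX, x, hxEh, rfl⟩
    -- aEh ⊆ pastClass X (l+1) (a x)
    have hsubEi : wordMulSet X [a] (pastClass X (l + 2) x₀) ⊆
        pastClass X (l + 1) (prepend [a] x) := by
      rintro z' ⟨hz'X, x', hx'Eh, rfl⟩
      exact ⟨hz'X, pastSet_prepend_eq X (l + 1) a (hx'Eh.2.trans hxEh.2.symm)⟩
    have hEiEj : pastClass X (l + 1) (prepend [a] x) ⊆ Ej := by
      obtain ⟨xj, hxjX, rfl⟩ := hj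
      rw [← pastClass_eq_of_mem X l hzEj]
      exact fun y hy => pastClass_mono X l hy
    constructor
    · refine ⟨pastClass X (l + 1) (prepend [a] x),
        ⟨⟨prepend [a] x, hzX, rfl⟩, hEiEj, hne, hsubEi⟩, ?_⟩
      rintro Ei' ⟨⟨y, hyX, rfl⟩, _, _, hsub'⟩
      have : prepend [a] x ∈ pastClass X (l + 1) y := hsub' ⟨hzX, x, hxEh, rfl⟩
      exact (pastClass_eq_of_mem X (l + 1) this).symm
    · -- second ∃!
      have hxX : x ∈ X := hxEh.1
      have hEhEi : pastClass X (l + 2) x₀ ⊆ pastClass X (l + 1) x := by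
        rw [← pastClass_eq_of_mem X (l + 2) hxEh]
        exact fun y hy => pastClass_mono X (l + 1) hy
      have hne' : (wordMulSet X [a] (pastClass X (l + 1) x)).Nonempty :=
        ⟨prepend [a] x, hzX, x, mem_pastClass_self X _ hxX, rfl⟩
      have hsub' : wordMulSet X [a] (pastClass X (l + 1) x) ⊆ Ej := by
        rintro z' ⟨hz'X, x', hx', rfl⟩
        obtain ⟨xj, hxjX, rfl⟩ := hj
        have := pastSet_prepend_eq X l a hx'.2
        exact ⟨hz'X, this.trans hzEj.2⟩
      refine ⟨pastClass X (l + 1) x, ⟨⟨x, hxX, rfl⟩, hEhEi, hne', hsub'⟩, ?_⟩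
      rintro Ei' ⟨⟨y, hyX, rfl⟩, hEh', _, _⟩
      have : x ∈ pastClass X (l + 1) y := hEh' hxEh
      exact (pastClass_eq_of_mem X (l + 1) this).symm
  · intro hneg
    constructor
    · rintro ⟨Ei, _, hsub1, hne1, hsub2⟩
      exact hneg ⟨hne1, hsub2.trans hsub1⟩
    · rintro ⟨Ei, ⟨y, hyX, rfl⟩, hEh, hne1, hsub2⟩
      obtain ⟨z, hzX, x', hx', rfl⟩ := hne1
      have hx₀Ei : x₀ ∈ pastClass X (l + 1) y := hEh hx₀Eh
      have haP : [a] ∈ pastSet X (l + 1) x' := ⟨by simp, hzX⟩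
      have haP0 : [a] ∈ pastSet X (l + 1) x₀ := by
        rw [hx₀Ei.2, ← hx'.2]; exact haP
      refine hneg ⟨⟨prepend [a] x₀, haP0.2, x₀, hx₀Eh, rfl⟩, ?_⟩
      rintro z' ⟨hz'X, x'', hx'', rfl⟩
      exact hsub2 ⟨hz'X, x'', hEh hx'', rfl⟩
end
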